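/- arXiv:2209.06497 — 2 statements merged into one kernel-verified Lean document; each statement's English description precedes it below -/
import Mathlib

section
/- A torsion-free cotorsion abelian group is algebraically compact. -/
universe u

/-- Old Mathlib definition (removed since): no nontrivial element has finite order. -/
def AddMonoid.IsTorsionFree (G : Type*) [AddMonoid G] : Prop :=
  ∀ g : G, g ≠ 0 → ¬IsOfFinAddOrder g

/-- An abelian group `A` is cotorsion: every extension of `A` by a torsion-free
abelian group splits. -/
def IsCotorsion (A : Type u) [AddCommGroup A] : Prop :=
  ∀ (B : Type u) [AddCommGroup B] (i : A →+ B), Function.Injective i →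
    AddMonoid.IsTorsionFree (B ⧸ i.range) →
    ∃ r : B →+ A, r.comp i = AddMonoidHom.id A

/-- A subgroup `A ≤ B` is pure if every element of `A` divisible by `n` in `B`
is divisible by `n` inside `A`. -/
def IsPureIn {B : Type u} [AddCommGroup B] (A : AddSubgroup B) : Prop :=
  ∀ (n : ℤ) (a : B), a ∈ A → (∃ b : B, n • b = a) → ∃ a' ∈ A, n • a' = a

/-- `A` is algebraically compact if it is a direct summand of every abelian group
containing it as a pure subgroup. -/
def IsAlgebraicallyCompact (A : Type u) [AddCommGroup A] : Prop :=
  ∀ (B : Type u) [AddCommGroup B] (i : A →+ B), Function.Injective i →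
    IsPureIn i.range →
    ∃ r : B →+ A, r.comp i = AddMonoidHom.id A

/-!
Let `T` be the torsion subgroup of a group `B` containing `A` as a pure subgroup. Since `A` is
torsion-free it meets `T` trivially, so `A` embeds in `B ⧸ T`, and purity of `A` in `B` makes
the cokernel `(B ⧸ T) ⧸ A` torsion-free. As `A` is cotorsion, this extension splits, and the
splitting composed with `B → B ⧸ T` is a retraction of `B` onto `A`.
-/

open AddCommGroup QuotientAddGroup

theorem AddMonoid.isTorsionFree_iff_nsmul_eq_zero {G : Type*} [AddMonoid G] :
    AddMonoid.IsTorsionFree G ↔ ∀ (n : ℕ) (g : G), 0 < n → n • g = 0 → g = 0 := by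
  refine ⟨fun h n g hn hng => ?_, fun h g hg hfin => ?_⟩
  · by_contra hg
    exact h g hg (isOfFinAddOrder_iff_nsmul_eq_zero.mpr ⟨n, hn, hng⟩)
  · obtain ⟨n, hn, hng⟩ := isOfFinAddOrder_iff_nsmul_eq_zero.mp hfin
    exact hg (h n g hn hng)

theorem QuotientAddGroup.isTorsionFree_of_nsmul_mem {G : Type*} [AddCommGroup G]
    {H : AddSubgroup G} (hH : ∀ (n : ℕ) (g : G), 0 < n → n • g ∈ H → g ∈ H) :
    AddMonoid.IsTorsionFree (G ⧸ H) := by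
  refine AddMonoid.isTorsionFree_iff_nsmul_eq_zero.mpr fun n x hn hnx => ?_
  induction x using QuotientAddGroup.induction_on with
  | H g =>
    rw [← mk_nsmul, eq_zero_iff] at hnx
    exact (eq_zero_iff g).mpr (hH n g hn hnx)

theorem injective_mk_torsion_comp {A B : Type*} [AddCommGroup A] [AddCommGroup B]
    (htf : AddMonoid.IsTorsionFree A) {i : A →+ B} (hi : Function.Injective i) :
    Function.Injective ((mk' (torsion B)).comp i) := by
  refine (injective_iff_map_eq_zero _).mpr fun a ha => ?_
  have hfin : IsOfFinAddOrder (i a) := (eq_zero_iff (i a)).mp ha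
  by_contra ha0
  exact htf a ha0 (hi.isOfFinAddOrder_iff.mp hfin)

theorem IsPureIn.mem_sup_torsion_of_nsmul_mem {B : Type*} [AddCommGroup B]
    {S : AddSubgroup B} (hS : IsPureIn S) {n : ℕ} {b : B} (hn : 0 < n)
    (hnb : n • b ∈ S ⊔ torsion B) : b ∈ S ⊔ torsion B := by
  obtain ⟨s, hs, t, ht, hst⟩ := AddSubgroup.mem_sup.mp hnb
  obtain ⟨m, hm, hmt⟩ := isOfFinAddOrder_iff_nsmul_eq_zero.mp ht
  have hmnb : (m * n) • b = m • s := by rw [mul_smul, ← hst, smul_add, hmt, add_zero]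
  obtain ⟨s', hs', hs's⟩ :=
    hS (m * n : ℕ) (m • s) (S.nsmul_mem hs m) ⟨b, by rw [natCast_zsmul, hmnb]⟩
  have hbs' : b - s' ∈ torsion B := isOfFinAddOrder_iff_nsmul_eq_zero.mpr
    ⟨m * n, Nat.mul_pos hm hn, by rw [smul_sub, hmnb, ← hs's, natCast_zsmul, sub_self]⟩
  simpa using AddSubgroup.add_mem_sup hs' hbs'

theorem IsPureIn.map_mk_torsion_nsmul_mem {B : Type*} [AddCommGroup B]
    {S : AddSubgroup B} (hS : IsPureIn S) (n : ℕ) (y : B ⧸ torsion B) (hn : 0 < n)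
    (hny : n • y ∈ S.map (mk' (torsion B))) : y ∈ S.map (mk' (torsion B)) := by
  induction y using QuotientAddGroup.induction_on with
  | H b =>
    change mk' _ (n • b) ∈ _ at hny
    change mk' _ b ∈ _
    rw [← AddSubgroup.mem_comap, AddSubgroup.comap_map_eq, ker_mk'] at hny ⊢
    exact hS.mem_sup_torsion_of_nsmul_mem hn hny

/-- A torsion-free cotorsion abelian group is algebraically compact. -/
theorem algebraicallyCompact_of_torsionFree_cotorsion (A : Type) [AddCommGroup A]
    (htf : AddMonoid.IsTorsionFree A) (hct : IsCotorsion A) :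
    IsAlgebraicallyCompact A := by
  intro B _ i hi hpure
  have hcoker :
      AddMonoid.IsTorsionFree ((B ⧸ torsion B) ⧸ ((mk' (torsion B)).comp i).range) := by
    rw [← AddMonoidHom.map_range]
    exact isTorsionFree_of_nsmul_mem hpure.map_mk_torsion_nsmul_mem
  obtain ⟨r, hr⟩ := hct _ _ (injective_mk_torsion_comp htf hi) hcoker
  exact ⟨r.comp (mk' (torsion B)), by rw [AddMonoidHom.comp_assoc, hr]⟩
end

section
/- The quotient group (∏_{ℵ₀} ℤ)/(⊕_{ℵ₀} ℤ) is divisible by every nonzero integer on its torsion-free part; in particular, it is a cotorsion abelian group. -/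
/-!
In `(ℕ → ℤ) ⧸ ⊕ℤ` every system `vₙ = kₙ vₙ₊₁ + wₙ` has a solution: `vₙ = ∑_{m ≥ n} kₙ ⋯ kₘ₋₁ wₘ`
makes sense coordinatewise once the sum at coordinate `j` is cut off at `m ≤ j`, and the cut-off
only changes finitely many coordinates. Such systems are exactly what is needed to extend a
homomorphism across a rank-one torsion-free group `⋃ₙ ℤ eₙ` with `eₙ = kₙ eₙ₊₁`. Now let `A ≤ B`
with `B / A` torsion-free, and take a Zorn-maximal partial retraction `B → A` whose domain `S` is
pure. If `b ∉ S`, the pure closure of `S + ℤ b` is such a rank-one union over `S`, so the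
retraction extends to it; hence the maximal retraction is total.
-/

universe u

/-- The subgroup `⊕_{ℵ₀} ℤ` of finitely supported sequences inside `∏_{ℵ₀} ℤ`. -/
def finSuppSubgroup : AddSubgroup (ℕ → ℤ) where
  carrier := {f | (Function.support f).Finite}
  zero_mem' := by simp
  add_mem' := fun hf hg => (hf.union hg).subset (Function.support_add _ _)
  neg_mem' := fun hf => by simpa [Function.support_neg] using hf

-- The equations extending a homomorphism across `⋃ₙ ℤ eₙ`, `eₙ = kₙ eₙ₊₁`, by `eₙ ↦ vₙ`.
def ChainSystemsSolvable (A : Type*) [AddCommGroup A] : Prop :=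
  ∀ (k : ℕ → ℤ) (w : ℕ → A), ∃ v : ℕ → A, ∀ n, v n = k n • v (n + 1) + w n

open Finset in
theorem Finset.sum_Icc_prod_Ico_mul {R : Type*} [CommSemiring R] (k a : ℕ → R) {n j : ℕ}
    (h : n ≤ j) : ∑ m ∈ Icc n j, (∏ l ∈ Ico n m, k l) * a m =
      a n + k n * ∑ m ∈ Icc (n + 1) j, (∏ l ∈ Ico (n + 1) m, k l) * a m := by
  rw [← Ioc_insert_left h, sum_insert left_notMem_Ioc, Ico_self, prod_empty, one_mul,
    ← Icc_add_one_left_eq_Ioc, mul_sum]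
  refine congrArg _ (sum_congr rfl fun m hm => ?_)
  rw [prod_eq_prod_Ico_succ_bot (by grind), mul_assoc]

theorem mk_eq_mk_finSuppSubgroup_of_forall_le {f g : ℕ → ℤ} (N : ℕ) (h : ∀ j, N ≤ j → f j = g j) :
    (f : (ℕ → ℤ) ⧸ finSuppSubgroup) = g := by
  rw [QuotientAddGroup.eq]
  refine (Set.finite_Iio N).subset fun j hj => ?_
  by_contra hjN
  exact hj (by simp [h j (not_lt.1 hjN)])

theorem chainSystemsSolvable_quotient_finSuppSubgroup :
    ChainSystemsSolvable ((ℕ → ℤ) ⧸ finSuppSubgroup) := by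
  intro k w
  choose W hW using fun n => QuotientAddGroup.mk_surjective (w n)
  let V (n : ℕ) : ℕ → ℤ := fun j => ∑ m ∈ Finset.Icc n j, (∏ l ∈ Finset.Ico n m, k l) * W m j
  refine ⟨fun n => V n, fun n => ?_⟩
  rw [← hW, ← QuotientAddGroup.mk_zsmul, ← QuotientAddGroup.mk_add]
  exact mk_eq_mk_finSuppSubgroup_of_forall_le n fun j hj => by
    simp [V, Finset.sum_Icc_prod_Ico_mul _ _ hj, add_comm]

open Submodule

theorem Int.exists_eq_mul_isCoprime {m n : ℤ} (hm : m ≠ 0) :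
    ∃ g m' n' : ℤ, g ≠ 0 ∧ m = g * m' ∧ n = g * n' ∧ IsCoprime m' n' := by
  obtain ⟨g, m', n', hg, hcop, rfl, rfl⟩ := Int.exists_gcd_one' (Int.gcd_pos_of_ne_zero_left n hm)
  exact ⟨g, m', n', by omega, mul_comm _ _, mul_comm _ _, Int.isCoprime_iff_gcd_eq_one.2 hcop⟩

theorem DirectedOn.exists_seq_cofinal {α : Type*} [Countable α] {r : α → α → Prop} {s : Set α}
    (hs : DirectedOn r s) (hne : s.Nonempty) :
    ∃ D : ℕ → α, (∀ k, D k ∈ s) ∧ (∀ k, r (D k) (D (k + 1))) ∧ ∀ d ∈ s, ∃ k, r d (D k) := by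
  have : Inhabited s := ⟨⟨hne.some, hne.some_mem⟩⟩
  have := Encodable.ofCountable s
  have hdir : Directed r (Subtype.val : s → α) := directedOn_iff_directed.1 hs
  exact ⟨fun k => hdir.sequence _ k, fun k => (hdir.sequence _ k).2, hdir.sequence_mono_nat,
    fun d hd => ⟨_, hdir.rel_sequence ⟨d, hd⟩⟩⟩

section Divisors

variable {Q : Type*} [AddCommGroup Q]

def zsmulDivisors (b : Q) : Set ℤ := {d | d ≠ 0 ∧ ∃ y : Q, d • y = b}

theorem one_mem_zsmulDivisors (b : Q) : (1 : ℤ) ∈ zsmulDivisors b :=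
  ⟨one_ne_zero, b, one_smul ℤ b⟩

theorem directedOn_zsmulDivisors (b : Q) : DirectedOn (· ∣ ·) (zsmulDivisors b) := by
  rintro d ⟨hd, y, hy⟩ d' ⟨hd', y', hy'⟩
  obtain ⟨g, δ, δ', hg, rfl, rfl, s, t, hst⟩ := Int.exists_eq_mul_isCoprime (n := d') hd
  refine ⟨g * δ * δ', ⟨by simp_all, t • y + s • y', ?_⟩, ⟨δ', rfl⟩, ⟨δ, by ring⟩⟩
  linear_combination (norm := module) (t * δ') • hy + (s * δ) • hy' + hst • b

theorem exists_mem_zsmulDivisors_of_zsmul_eq [IsAddTorsionFree Q] {b x : Q} {d m : ℤ}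
    (hd : d ≠ 0) (h : d • x = m • b) : ∃ ν ∈ zsmulDivisors b, ∃ μ : ℤ, ν • x = μ • b := by
  obtain ⟨g, ν, μ, hg, rfl, rfl, s, t, hst⟩ := Int.exists_eq_mul_isCoprime (n := m) hd
  have hνx : ν • x = μ • b := by
    rw [mul_smul, mul_smul] at h
    exact zsmul_right_injective hg h
  refine ⟨ν, ⟨right_ne_zero_of_mul hd, s • b + t • x, ?_⟩, μ, hνx⟩
  linear_combination (norm := module) t • hνx + hst • b

-- The pure closure of `ℤ ∙ b` is the increasing union of the cyclic groups `ℤ ∙ e k`.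
theorem exists_cyclic_chain [IsAddTorsionFree Q] (b : Q) :
    ∃ (e : ℕ → Q) (c : ℕ → ℤ), (∀ k, e k = c k • e (k + 1)) ∧ (∀ k, b ∈ ℤ ∙ e k) ∧
      ∀ n : ℤ, n ≠ 0 → ∀ x k, n • x ∈ ℤ ∙ e k → ∃ k', x ∈ ℤ ∙ e k' := by
  obtain ⟨D, hD, hDdvd, hDcof⟩ :=
    (directedOn_zsmulDivisors b).exists_seq_cofinal ⟨1, one_mem_zsmulDivisors b⟩
  choose e he using fun k => (hD k).2
  choose c hc using hDdvd
  refine ⟨e, c, fun k => zsmul_right_injective (hD k).1 ?_,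
    fun k => mem_span_singleton.2 ⟨D k, he k⟩, ?_⟩
  · show D k • e k = D k • c k • e (k + 1)
    rw [he, smul_smul, ← hc, he]
  intro n hn x k hx
  obtain ⟨m, hm⟩ := mem_span_singleton.1 hx
  have hDnx : (D k * n) • x = m • b := by rw [mul_smul, ← hm, smul_comm, he]
  obtain ⟨ν, hν, μ, hνx⟩ := exists_mem_zsmulDivisors_of_zsmul_eq (mul_ne_zero (hD k).1 hn) hDnx
  obtain ⟨k', ρ, hρ⟩ := hDcof ν hν
  refine ⟨k', mem_span_singleton.2 ⟨μ * ρ, zsmul_right_injective hν.1 ?_⟩⟩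
  show ν • (μ * ρ) • e k' = ν • x
  rw [hνx, ← he k', hρ]
  module

namespace LinearPMap

variable {R E F : Type*} [Ring R] [AddCommGroup E] [Module R E] [AddCommGroup F] [Module R F]

theorem mkSpanSingleton'_le {x : E} {y : F} {H : ∀ c : R, c • x = 0 → c • y = 0}
    {g : E →ₗ.[R] F} (hx : x ∈ g.domain) (hy : g ⟨x, hx⟩ = y) : mkSpanSingleton' x y H ≤ g := by
  refine ⟨span_le.2 (Set.singleton_subset_iff.2 hx), ?_⟩
  rintro ⟨z, hz⟩ ⟨z', hz'⟩ (rfl : z = z')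
  obtain ⟨c, rfl⟩ := mem_span_singleton.1 hz
  have : (⟨c • x, hz'⟩ : g.domain) = c • ⟨x, hx⟩ := rfl
  rw [mkSpanSingleton'_apply, this, g.map_smul, hy]
  rfl

noncomputable def supSpanSingleton' (f : E →ₗ.[R] F) (x : E) (y : F)
    (hx : ∀ c : R, c • x ∈ f.domain → c = 0) : E →ₗ.[R] F :=
  f.sup (mkSpanSingleton' x y fun c hc => by simp [hx c (hc ▸ zero_mem _)]) <|
    sup_h_of_disjoint _ _ <| disjoint_def.2 fun z hz hzx => by
      obtain ⟨c, rfl⟩ := mem_span_singleton.1 hzx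
      rw [hx c hz, zero_smul]

variable {f : E →ₗ.[R] F} {x : E} {y : F} {hx : ∀ c : R, c • x ∈ f.domain → c = 0}

@[simp]
theorem domain_supSpanSingleton' : (f.supSpanSingleton' x y hx).domain = f.domain ⊔ R ∙ x := rfl

theorem le_supSpanSingleton' : f ≤ f.supSpanSingleton' x y hx := LinearPMap.left_le_sup ..

theorem supSpanSingleton'_apply {x' : E} (hx' : x' ∈ f.domain) (c : R) {z : E} (h)
    (hz : x' + c • x = z) : f.supSpanSingleton' x y hx ⟨z, h⟩ = f ⟨x', hx'⟩ + c • y := by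
  refine (sup_apply _ ⟨x', hx'⟩ ⟨c • x, smul_mem _ c (mem_span_singleton_self x)⟩
    ⟨z, h⟩ hz).trans ?_
  rw [mkSpanSingleton'_apply]
  rfl

theorem supSpanSingleton'_le {g : E →ₗ.[R] F} (hfg : f ≤ g) (hxg : x ∈ g.domain)
    (hy : g ⟨x, hxg⟩ = y) : f.supSpanSingleton' x y hx ≤ g :=
  LinearPMap.sup_le _ hfg (mkSpanSingleton'_le hxg hy)

end LinearPMap

namespace Submodule

variable {R M : Type*} [Ring R] [AddCommGroup M] [Module R M]

theorem mem_sup_span_singleton_iff (p : Submodule R M) (x y : M) :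
    x ∈ p ⊔ R ∙ y ↔ p.mkQ x ∈ R ∙ p.mkQ y := by
  rw [← comap_map_mkQ, mem_comap, map_span, Set.image_singleton]

theorem isAddTorsionFree_quotient_of_nsmulSaturated {p : Submodule R M} (hp : p.toAddSubmonoid.NSMulSaturated) : IsAddTorsionFree (M ⧸ p) where
  nsmul_right_injective n hn := by
    intro a b h
    obtain ⟨x, rfl⟩ := mkQ_surjective p a
    obtain ⟨y, rfl⟩ := mkQ_surjective p b
    simp only [mkQ_apply, ← Quotient.mk_smul, Quotient.eq, ← nsmul_sub] at h ⊢
    exact (hp h).resolve_left hn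

end Submodule

theorem LinearPMap.exists_le_nsmulSaturated_mem_domain {A B : Type*} [AddCommGroup A]
    [AddCommGroup B] (hA : ChainSystemsSolvable A) (f : B →ₗ.[ℤ] A)
    (hf : f.domain.toAddSubmonoid.NSMulSaturated) {b : B} (hb : b ∉ f.domain) :
    ∃ g : B →ₗ.[ℤ] A, f ≤ g ∧ b ∈ g.domain ∧ g.domain.toAddSubmonoid.NSMulSaturated := by
  have := isAddTorsionFree_quotient_of_nsmulSaturated hf
  obtain ⟨e, c, hec, hbe, hpure⟩ := exists_cyclic_chain (f.domain.mkQ b)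
  choose e' he' using fun k => f.domain.mkQ_surjective (e k)
  have hindep (k : ℕ) (m : ℤ) (hm : m • e' k ∈ f.domain) : m = 0 := by
    have hek : e k ≠ 0 := by
      intro h0
      have hbk := hbe k
      rw [h0, span_zero_singleton, mem_bot, mkQ_apply, Quotient.mk_eq_zero] at hbk
      exact hb hbk
    refine (IsAddTorsionFree.zsmul_eq_zero_iff_left hek).1 ?_
    rw [← he', ← map_zsmul, mkQ_apply, Quotient.mk_eq_zero]
    exact hm
  have hq (k : ℕ) : e' k - c k • e' (k + 1) ∈ f.domain := by
    rw [← ker_mkQ f.domain, LinearMap.mem_ker, _root_.map_sub, map_zsmul, he', he', hec, sub_self]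
  obtain ⟨v, hv⟩ := hA c fun k => f ⟨_, hq k⟩
  let φ (k : ℕ) := f.supSpanSingleton' (e' k) (v k) (hindep k)
  have hφ : Monotone φ := monotone_nat_of_le_succ fun k =>
    supSpanSingleton'_le le_supSpanSingleton'
      (mem_sup.2 ⟨_, hq k, _, smul_mem _ _ (mem_span_singleton_self _), sub_add_cancel _ _⟩)
      ((supSpanSingleton'_apply (hq k) (c k) _ (sub_add_cancel _ _)).trans (by rw [hv k, add_comm]))
  have hdir : DirectedOn (· ≤ ·) (Set.range φ) := directedOn_range.2 hφ.directed_le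
  have hmem {x : B} : x ∈ (LinearPMap.sSup _ hdir).domain ↔ ∃ k, f.domain.mkQ x ∈ ℤ ∙ e k := by
    simp only [mem_domain_sSup_iff (Set.range_nonempty φ) hdir, Set.exists_range_iff, φ,
      domain_supSpanSingleton', mem_sup_span_singleton_iff, he']
  refine ⟨LinearPMap.sSup _ hdir, le_supSpanSingleton'.trans (LinearPMap.le_sSup hdir ⟨0, rfl⟩),
    hmem.2 ⟨0, hbe 0⟩, fun n x hnx => ?_⟩
  rcases eq_or_ne n 0 with rfl | hn
  · exact .inl rfl
  obtain ⟨k, hk⟩ := hmem.1 hnx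
  rw [map_nsmul, ← natCast_zsmul] at hk
  exact .inr (hmem.2 (hpure n (by exact_mod_cast hn) _ k hk))

theorem LinearPMap.exists_le_domain_eq_top {A B : Type*} [AddCommGroup A] [AddCommGroup B]
    (hA : ChainSystemsSolvable A) (f₀ : B →ₗ.[ℤ] A)
    (hf₀ : f₀.domain.toAddSubmonoid.NSMulSaturated) :
    ∃ f : B →ₗ.[ℤ] A, f₀ ≤ f ∧ f.domain = ⊤ := by
  obtain ⟨f, hf₀f, hf⟩ :=
    zorn_le_nonempty₀ {f : B →ₗ.[ℤ] A | f.domain.toAddSubmonoid.NSMulSaturated}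
    (fun c hsat hc g hg => ⟨LinearPMap.sSup c hc.directedOn, fun n x hnx => by
      obtain ⟨g', hg'c, hg'⟩ := (mem_domain_sSup_iff ⟨g, hg⟩ hc.directedOn).1 hnx
      exact (hsat hg'c hg').imp_right fun hx => (LinearPMap.le_sSup _ hg'c).1 hx,
      fun _ => LinearPMap.le_sSup _⟩) f₀ hf₀
  refine ⟨f, hf₀f, eq_top_iff.2 fun b _ => ?_⟩
  by_contra hb
  obtain ⟨g, hfg, hbg, hg⟩ := exists_le_nsmulSaturated_mem_domain hA f hf.prop hb
  exact hb ((hf.le_of_ge hg hfg).1 hbg)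

theorem AddSubgroup.nsmulSaturated_of_isTorsionFree_quotient {G : Type*} [AddCommGroup G]
    {H : AddSubgroup G} (h : AddMonoid.IsTorsionFree (G ⧸ H)) : H.NSMulSaturated := by
  intro n x hnx
  by_contra! hx
  refine h x (by rw [Ne, QuotientAddGroup.eq_zero_iff]; exact hx.2) ?_
  refine isOfFinAddOrder_iff_nsmul_eq_zero.2 ⟨n, Nat.pos_of_ne_zero hx.1, ?_⟩
  rw [← QuotientAddGroup.mk_nsmul, QuotientAddGroup.eq_zero_iff]
  exact hnx

theorem isCotorsion_of_chainSystemsSolvable {A : Type u} [AddCommGroup A]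
    (hA : ChainSystemsSolvable A) : IsCotorsion A := by
  intro B _ i hi htf
  let f₀ : B →ₗ.[ℤ] A :=
    ⟨LinearMap.range i.toIntLinearMap, (LinearEquiv.ofInjective _ hi).symm.toLinearMap⟩
  obtain ⟨f, hf₀f, hf⟩ := LinearPMap.exists_le_domain_eq_top hA f₀
    (AddSubgroup.nsmulSaturated_of_isTorsionFree_quotient htf)
  refine ⟨(f.toFun ∘ₗ LinearMap.id.codRestrict f.domain fun x => hf ▸ mem_top).toAddMonoidHom, ?_⟩
  ext a
  refine (hf₀f.2 (x := ⟨i a, a, rfl⟩) rfl).symm.trans ?_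
  exact (LinearEquiv.symm_apply_eq _).2 rfl

/-- The quotient group `(∏_{ℵ₀} ℤ)/(⊕_{ℵ₀} ℤ)` is a cotorsion abelian group. -/
theorem quotient_prod_by_sum_cotorsion :
    IsCotorsion ((ℕ → ℤ) ⧸ finSuppSubgroup) :=
  isCotorsion_of_chainSystemsSolvable chainSystemsSolvable_quotient_finSuppSubgroup
end Divisors
end
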